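/- Let a ≥ 2 be a positive integer and suppose c is a positive rational such that c·a is a positive integer with c·a > 1. Then the infinite regular continued fraction [0; c·a − 1, 1, c·a² − 2, 1, c·a³ − 2, 1, c·a⁴ − 2, ...] (with initial partial quotient c·a − 1 followed by period blocks 1, c·a^{k+1} − 2 for k = 1, 2, 3, ...) equals (Σ_{n=0}^∞ (−1)^n/(c^{2n+1} · a^{2n²+3n+1} · (1/a²; 1/a²)_n)) / (Σ_{n=0}^∞ (−1)^n/(c^{2n} · a^{2n²+n} · (1/a²; 1/a²)_n)). -/

import Mathlib

open Filter Topology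

/-- Value of the finite continued fraction `[b₀; b₁, …, bₙ]`. -/
noncomputable def contFracList : List ℝ → ℝ
  | [] => 0
  | [x] => x
  | x :: y :: xs => x + 1 / contFracList (y :: xs)

/-- The `n`-th convergent `[b 0; b 1, …, b n]` of the infinite regular continued
fraction with partial quotients `b`. -/
noncomputable def cfConv (b : ℕ → ℝ) (n : ℕ) : ℝ :=
  contFracList ((List.range (n + 1)).map b)

/-- The infinite regular continued fraction with partial quotients `b` converges to `L`,
i.e. the limit of its convergents is `L`. -/
def CFracEq (b : ℕ → ℝ) (L : ℝ) : Prop :=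
  Filter.Tendsto (cfConv b) Filter.atTop (nhds L)

/-- The q-Pochhammer symbol `(c; q)ₙ = ∏_{j=0}^{n-1} (1 - c qʲ)`. -/
noncomputable def qPoch (c q : ℝ) (n : ℕ) : ℝ :=
  ∏ j ∈ Finset.range n, (1 - c * q ^ j)

noncomputable def cfNum : List ℝ → ℝ
  | [] => 1
  | [x] => x
  | x :: y :: t => x * cfNum (y :: t) + cfNum t

noncomputable def cfDen : List ℝ → ℝ
  | [] => 0
  | _ :: t => cfNum t

lemma cfNum_cons (x : ℝ) (l : List ℝ) : cfNum (x :: l) = x * cfNum l + cfDen l := by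
  cases l with
  | nil => simp [cfNum, cfDen]
  | cons y t => simp [cfNum, cfDen]

lemma cfDen_cons (x : ℝ) (l : List ℝ) : cfDen (x :: l) = cfNum l := rfl

/-- basic positivity + value of finite CF -/
lemma contFracList_eq : ∀ l : List ℝ, l ≠ [] → (∀ x ∈ l, 1 ≤ x) →
    1 ≤ cfNum l ∧ 1 ≤ cfDen l ∧ contFracList l = cfNum l / cfDen l := by
  intro l
  induction l with
  | nil => intro h; exact absurd rfl h
  | cons x t ih =>
    intro _ hmem
    have hx : 1 ≤ x := hmem x (by simp)
    cases t with
    | nil => simp [cfNum, cfDen, contFracList, hx]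
    | cons y u =>
      obtain ⟨h1, h2, h3⟩ := ih (by simp) (fun z hz => hmem z (by simp [hz]))
      have hN : (0:ℝ) < cfNum (y :: u) := lt_of_lt_of_le one_pos h1
      have hD : (0:ℝ) ≤ cfDen (y :: u) := le_trans zero_le_one h2
      constructor
      · rw [cfNum_cons]
        nlinarith
      constructor
      · rw [cfDen_cons]; exact h1
      · show x + 1 / contFracList (y :: u) = _
        rw [h3, one_div_div, show cfNum (x :: y :: u) = x * cfNum (y :: u) + cfDen (y :: u)
          from cfNum_cons _ _, cfDen_cons x (y :: u), add_div, mul_div_assoc,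
          div_self hN.ne', mul_one]
lemma cfNum_append (l : List ℝ) (x y : ℝ) :
    cfNum (l ++ [x, y]) = y * cfNum (l ++ [x]) + cfNum l ∧
      cfDen (l ++ [x, y]) = y * cfDen (l ++ [x]) + cfDen l := by
  induction l with
  | nil =>
    constructor
    · show cfNum [x, y] = y * cfNum [x] + cfNum []
      show x * cfNum [y] + cfNum [] = _
      simp [cfNum]; ring
    · show cfNum [y] = y * cfNum [] + cfDen []
      simp [cfNum, cfDen]
  | cons z l ih =>
    constructor
    · show cfNum (z :: (l ++ [x, y])) = y * cfNum (z :: (l ++ [x])) + cfNum (z :: l)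
      rw [cfNum_cons, cfNum_cons, cfNum_cons, ih.1, ih.2]
      ring
    · show cfDen (z :: (l ++ [x, y])) = y * cfDen (z :: (l ++ [x])) + cfDen (z :: l)
      rw [cfDen_cons, cfDen_cons, cfDen_cons, ih.1]

def cfR (b : ℕ → ℝ) (n : ℕ) : List ℝ := (List.range n).map (fun j => b (j + 1))

noncomputable def cfP (b : ℕ → ℝ) (n : ℕ) : ℝ := cfNum (cfR b n)
noncomputable def cfQ (b : ℕ → ℝ) (n : ℕ) : ℝ := cfDen (cfR b n)

lemma cfR_succ (b : ℕ → ℝ) (n : ℕ) : cfR b (n + 1) = cfR b n ++ [b (n + 1)] := by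
  simp [cfR, List.range_succ]

lemma cfP_zero (b : ℕ → ℝ) : cfP b 0 = 1 := rfl
lemma cfQ_zero (b : ℕ → ℝ) : cfQ b 0 = 0 := rfl
lemma cfP_one (b : ℕ → ℝ) : cfP b 1 = b 1 := by
  simp [cfP, cfR, List.range_succ, cfNum]
lemma cfQ_one (b : ℕ → ℝ) : cfQ b 1 = 1 := by
  simp [cfQ, cfR, List.range_succ, cfDen, cfNum]

lemma contFracList_cons (x : ℝ) (l : List ℝ) (h : l ≠ []) :
    contFracList (x :: l) = x + 1 / contFracList l := by
  cases l with
  | nil => exact absurd rfl h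
  | cons y t => rfl

section cfLimit

variable (b t : ℕ → ℝ)

lemma cfP_rec (n : ℕ) : cfP b (n + 2) = b (n + 2) * cfP b (n + 1) + cfP b n := by
  have h : cfR b (n + 2) = cfR b n ++ [b (n + 1), b (n + 2)] := by
    rw [cfR_succ, cfR_succ, List.append_assoc]; rfl
  rw [cfP, h, (cfNum_append _ _ _).1, ← cfR_succ]; rfl

lemma cfQ_rec (n : ℕ) : cfQ b (n + 2) = b (n + 2) * cfQ b (n + 1) + cfQ b n := by
  have h : cfR b (n + 2) = cfR b n ++ [b (n + 1), b (n + 2)] := by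
    rw [cfR_succ, cfR_succ, List.append_assoc]; rfl
  rw [cfQ, h, (cfNum_append _ _ _).2, ← cfR_succ]; rfl

variable (hb : ∀ i, 1 ≤ i → 1 ≤ b i)

include hb in
lemma cfP_pos : ∀ n : ℕ, 1 ≤ cfP b n ∧ 1 ≤ cfP b (n + 1) := by
  intro n
  induction n with
  | zero => exact ⟨by rw [cfP_zero], by rw [cfP_one]; exact hb 1 le_rfl⟩
  | succ n ih =>
    refine ⟨ih.2, ?_⟩
    rw [cfP_rec]
    nlinarith [ih.1, ih.2, hb (n + 2) (by omega)]

include hb in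
lemma cfQ_pos : ∀ n : ℕ, 0 ≤ cfQ b n ∧ 1 ≤ cfQ b (n + 1) := by
  intro n
  induction n with
  | zero => exact ⟨by rw [cfQ_zero], by rw [cfQ_one]⟩
  | succ n ih =>
    refine ⟨le_trans zero_le_one ih.2, ?_⟩
    rw [cfQ_rec]
    nlinarith [ih.1, ih.2, hb (n + 2) (by omega)]

include hb in
lemma cfP_growth : ∀ n : ℕ, (n : ℝ) ≤ 2 * cfP b n ∧ ((n : ℝ) + 1) ≤ 2 * cfP b (n + 1) := by
  intro n
  induction n with
  | zero =>
    refine ⟨by rw [cfP_zero]; norm_num, ?_⟩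
    rw [cfP_one]
    have := hb 1 le_rfl
    norm_num
    linarith
  | succ n ih =>
    refine ⟨by push_cast; linarith [ih.2], ?_⟩
    rw [cfP_rec]
    have h1 := (cfP_pos b hb n).1
    have h2 := (cfP_pos b hb n).2
    have h3 := hb (n + 2) (by omega)
    push_cast
    nlinarith [ih.1, ih.2]

include hb in
lemma cf_det : ∀ n : ℕ, cfQ b (n + 1) * cfP b n - cfQ b n * cfP b (n + 1) = (-1) ^ n := by
  intro n
  induction n with
  | zero => rw [cfP_zero, cfQ_zero, cfP_one, cfQ_one]; ring
  | succ n ih =>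
    rw [cfP_rec, cfQ_rec, pow_succ]
    nlinarith [ih]

variable (ht : ∀ i, 1 ≤ i → 0 < t i) (hrec : ∀ i, 1 ≤ i → t i = b i + 1 / t (i + 1))

include hb ht in
lemma cf_denpos (n : ℕ) : 0 < t (n + 2) * cfP b (n + 1) + cfP b n := by
  have h1 := (cfP_pos b hb n).1
  have h2 := (cfP_pos b hb n).2
  nlinarith [ht (n + 2) (by omega)]

include hb ht hrec in
lemma cf_value : ∀ n : ℕ,
    (t (n + 2) * cfQ b (n + 1) + cfQ b n) / (t (n + 2) * cfP b (n + 1) + cfP b n) = 1 / t 1 := by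
  intro n
  induction n with
  | zero =>
    have h2 : 0 < t 2 := ht 2 (by omega)
    have hb1 : 1 ≤ b 1 := hb 1 le_rfl
    have h1 : t 1 = b 1 + 1 / t 2 := hrec 1 le_rfl
    have ht1 : 0 < t 1 := ht 1 le_rfl
    rw [cfP_zero, cfQ_zero, cfP_one, cfQ_one, h1, mul_one, add_zero]
    rw [div_eq_div_iff (by nlinarith) (by positivity)]
    field_simp
  | succ n ih =>
    have h3 : (0:ℝ) < t (n + 3) := ht (n + 3) (by omega)
    have key : ∀ X Y : ℝ,
        t (n + 3) * (b (n + 2) * X + Y) + X = t (n + 3) * (t (n + 2) * X + Y) := by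
      intro X Y
      rw [hrec (n + 2) (by omega)]
      field_simp
      ring
    rw [show n + 1 + 2 = n + 3 from rfl, cfP_rec, cfQ_rec, key, key,
      mul_div_mul_left _ _ h3.ne']
    exact ih

variable (hb0 : b 0 = 0)

include hb hb0 in
lemma cf_conv_eq (n : ℕ) (hn : 1 ≤ n) : cfConv b n = cfQ b n / cfP b n := by
  have hmap : (List.range (n + 1)).map b = b 0 :: cfR b n := by
    rw [List.range_succ_eq_map]
    simp [cfR, List.map_map]
  have hne : cfR b n ≠ [] := by simp [cfR]; omega
  have hmem : ∀ x ∈ cfR b n, 1 ≤ x := by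
    intro x hx
    simp only [cfR, List.mem_map, List.mem_range] at hx
    obtain ⟨j, _, rfl⟩ := hx
    exact hb (j + 1) (by omega)
  obtain ⟨h1, h2, h3⟩ := contFracList_eq (cfR b n) hne hmem
  rw [cfConv, hmap, contFracList_cons _ _ hne, h3, one_div_div, hb0, zero_add]
  rfl

include hb ht hrec hb0 in
lemma cf_bound (m : ℕ) : |cfConv b (m + 1) - 1 / t 1| ≤ 2 / ((m : ℝ) + 1) := by
  have hD := cf_denpos b t hb ht m
  have hP1 := (cfP_pos b hb m).1
  have hP2 := (cfP_pos b hb m).2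
  have hP2' : (0:ℝ) < cfP b (m + 1) := by linarith
  have hgr := (cfP_growth b hb m).2
  have hdet := cf_det b hb m
  have hval := cf_value b t hb ht hrec m
  rw [cf_conv_eq b hb hb0 (m + 1) (by omega)]
  have hdiff : cfQ b (m + 1) / cfP b (m + 1) - 1 / t 1 =
      (cfQ b (m + 1) * cfP b m - cfQ b m * cfP b (m + 1)) /
        ((t (m + 2) * cfP b (m + 1) + cfP b m) * cfP b (m + 1)) := by
    rw [← hval, div_sub_div _ _ hP2'.ne' hD.ne']
    rw [div_eq_div_iff (by positivity) (by positivity)]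
    ring
  rw [hdiff, hdet, abs_div, abs_pow, abs_neg, abs_one, one_pow,
    abs_of_pos (by positivity : (0:ℝ) < (t (m + 2) * cfP b (m + 1) + cfP b m) * cfP b (m + 1))]
  rw [div_le_div_iff₀ (by positivity) (by positivity)]
  have hD1 : (1:ℝ) ≤ t (m + 2) * cfP b (m + 1) + cfP b m := by
    nlinarith [ht (m + 2) (by omega)]
  have hp : cfP b (m + 1) ≤ (t (m + 2) * cfP b (m + 1) + cfP b m) * cfP b (m + 1) :=
    le_mul_of_one_le_left (le_of_lt hP2') hD1
  linarith

include hb ht hrec hb0 in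
lemma cf_limit : CFracEq b (1 / t 1) := by
  rw [CFracEq, tendsto_iff_norm_sub_tendsto_zero]
  have h0 : Filter.Tendsto (fun n : ℕ => (2:ℝ) / n) Filter.atTop (nhds 0) :=
    tendsto_const_div_atTop_nhds_zero_nat 2
  refine squeeze_zero' (Filter.Eventually.of_forall fun n => norm_nonneg _) ?_ h0
  refine Filter.eventually_atTop.2 ⟨1, fun n hn => ?_⟩
  obtain ⟨m, rfl⟩ : ∃ m, n = m + 1 := ⟨n - 1, by omega⟩
  have hbd := cf_bound b t hb ht hrec hb0 m
  rw [Real.norm_eq_abs]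
  calc |cfConv b (m + 1) - 1 / t 1| ≤ 2 / ((m : ℝ) + 1) := hbd
    _ = 2 / (((m + 1 : ℕ) : ℝ)) := by push_cast; ring

end cfLimit

/-! ### The q-series -/

def eeE (k n : ℕ) : ℕ := 2 * n ^ 2 + (2 * k + 1) * n + k * (k + 1) / 2

lemma tri_succ (k : ℕ) : (k + 1) * (k + 2) / 2 = k * (k + 1) / 2 + (k + 1) := by
  have h : (k + 1) * (k + 2) = k * (k + 1) + (k + 1) * 2 := by ring
  rw [h, Nat.add_mul_div_right _ _ (by norm_num : (0:ℕ) < 2)]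

lemma ee_step (k n : ℕ) : eeE (k + 1) n = eeE k n + (2 * n + (k + 1)) := by
  unfold eeE
  rw [tri_succ]
  ring

lemma ee_ratio (k n : ℕ) : eeE k (n + 1) = eeE k n + (4 * n + 2 * k + 3) := by
  unfold eeE
  ring

lemma ee_shift (k n : ℕ) : eeE k (n + 1) = eeE (k + 2) n := by
  unfold eeE
  rw [tri_succ (k + 1), tri_succ k]
  ring

noncomputable def ddD (C A : ℝ) (k n : ℕ) : ℝ :=
  1 / (C ^ (2 * n + k) * A ^ eeE k n * qPoch (1 / A ^ 2) (1 / A ^ 2) n)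

noncomputable def ssS (C A : ℝ) (k : ℕ) : ℝ := ∑' n : ℕ, (-1 : ℝ) ^ n * ddD C A k n

section series

variable {C A : ℝ} (hC : 0 < C) (hA : 2 ≤ A) (hCA : 2 ≤ C * A)

include hA in
lemma hA0 : (0:ℝ) < A := by linarith

include hA in
lemma hq_bound : 0 < 1 / A ^ 2 ∧ 1 / A ^ 2 ≤ 1 / 4 := by
  have h : (0:ℝ) < A := by linarith
  constructor
  · positivity
  · rw [div_le_div_iff₀ (by positivity) (by norm_num)]
    nlinarith

lemma qPoch_succ (c q : ℝ) (n : ℕ) :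
    qPoch c q (n + 1) = qPoch c q n * (1 - c * q ^ n) := Finset.prod_range_succ _ _

lemma qPoch_zero (c q : ℝ) : qPoch c q 0 = 1 := rfl

include hA in
lemma qPoch_bounds' (n : ℕ) : (2 + (1 / A ^ 2) ^ n) / 3 ≤ qPoch (1 / A ^ 2) (1 / A ^ 2) n ∧
    qPoch (1 / A ^ 2) (1 / A ^ 2) n ≤ 1 := by
  obtain ⟨hq0, hq4⟩ := hq_bound hA
  induction n with
  | zero => rw [qPoch_zero]; norm_num
  | succ n ih =>
    rw [qPoch_succ]
    have hqn : (1 / A ^ 2) ^ n ≤ 1 := pow_le_one₀ (le_of_lt hq0) (by linarith)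
    have hqn0 : 0 < (1 / A ^ 2) ^ n := pow_pos hq0 n
    have hfac1 : 1 - (1 / A ^ 2) * (1 / A ^ 2) ^ n ≤ 1 := by nlinarith
    have hfac2 : 3/4 ≤ 1 - (1 / A ^ 2) * (1 / A ^ 2) ^ n := by nlinarith
    have hpow : (1 / A ^ 2) ^ (n + 1) = (1 / A ^ 2) * (1 / A ^ 2) ^ n := by rw [pow_succ]; ring
    constructor
    · rw [hpow]
      nlinarith [ih.1, ih.2]
    · nlinarith [ih.1, ih.2]

include hA in
lemma qPoch_bounds (n : ℕ) : 2/3 ≤ qPoch (1 / A ^ 2) (1 / A ^ 2) n ∧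
    qPoch (1 / A ^ 2) (1 / A ^ 2) n ≤ 1 := by
  obtain ⟨h1, h2⟩ := qPoch_bounds' hA n
  obtain ⟨hq0, _⟩ := hq_bound hA
  exact ⟨le_trans (by nlinarith [pow_pos hq0 n]) h1, h2⟩

include hC hA in
lemma dd_pos (k n : ℕ) : 0 < ddD C A k n := by
  have h1 := (qPoch_bounds hA n).1
  have h : (0:ℝ) < A := by linarith
  have : (0:ℝ) < qPoch (1 / A ^ 2) (1 / A ^ 2) n := by linarith
  unfold ddD
  positivity

include hC hA hCA in
lemma dd_ratio (k n : ℕ) : 6 * ddD C A k (n + 1) ≤ ddD C A k n := by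
  have hA' : (0:ℝ) < A := by linarith
  have hP1 := (qPoch_bounds hA n).1
  have hP2 := (qPoch_bounds hA n).2
  obtain ⟨hq0, hq4⟩ := hq_bound hA
  have hqn : (1 / A ^ 2) ^ n ≤ 1 := pow_le_one₀ (le_of_lt hq0) (by linarith)
  have hfac2' : (3:ℝ)/4 ≤ 1 - (1 / A ^ 2) * (1 / A ^ 2) ^ n := by
    nlinarith [pow_pos hq0 n]
  have key : ddD C A k (n + 1) * (C ^ 2 * A ^ (4 * n + 2 * k + 3) *
      (1 - (1 / A ^ 2) * (1 / A ^ 2) ^ n)) = ddD C A k n := by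
    have hden : (C ^ (2 * (n + 1) + k) * A ^ eeE k (n + 1) * qPoch (1 / A ^ 2) (1 / A ^ 2) (n + 1))
        = (C ^ (2 * n + k) * A ^ eeE k n * qPoch (1 / A ^ 2) (1 / A ^ 2) n) *
          (C ^ 2 * A ^ (4 * n + 2 * k + 3) * (1 - (1 / A ^ 2) * (1 / A ^ 2) ^ n)) := by
      rw [ee_ratio, qPoch_succ, show 2 * (n + 1) + k = (2 * n + k) + 2 by ring,
        pow_add, pow_add]
      ring
    have hY : C ^ 2 * A ^ (4 * n + 2 * k + 3) * (1 - (1 / A ^ 2) * (1 / A ^ 2) ^ n) ≠ 0 := by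
      have hp1 : (0:ℝ) < C ^ 2 * A ^ (4 * n + 2 * k + 3) := by positivity
      nlinarith
    unfold ddD
    rw [hden, one_div, mul_inv, mul_assoc, inv_mul_cancel₀ hY, mul_one]
    exact (one_div _).symm
  -- now : C^2 * A^(4n+2k+3) * (1 - q^{n+1}) ≥ 6
  have hfac : 6 ≤ C ^ 2 * A ^ (4 * n + 2 * k + 3) * (1 - (1 / A ^ 2) * (1 / A ^ 2) ^ n) := by
    have h8 : (8:ℝ) ≤ C ^ 2 * A ^ (4 * n + 2 * k + 3) := by
      have : C ^ 2 * A ^ (4 * n + 2 * k + 3) = (C * A) ^ 2 * A ^ (4 * n + 2 * k + 1) := by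
        rw [mul_pow, show 4 * n + 2 * k + 3 = 2 + (4 * n + 2 * k + 1) by ring, pow_add]
        ring
      rw [this]
      have hA1 : (2:ℝ) ≤ A ^ (4 * n + 2 * k + 1) := by
        calc (2:ℝ) = 2 ^ 1 := by norm_num
        _ ≤ 2 ^ (4 * n + 2 * k + 1) := by
            apply pow_le_pow_right₀ (by norm_num) (by omega)
        _ ≤ A ^ (4 * n + 2 * k + 1) := by
            apply pow_le_pow_left₀ (by norm_num) hA
      nlinarith
    have hfac2 : (3:ℝ)/4 ≤ 1 - (1 / A ^ 2) * (1 / A ^ 2) ^ n := by nlinarith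
    nlinarith
  have hdd := dd_pos hC hA k (n + 1)
  nlinarith [key, hfac, hdd]

include hC hA hCA in
lemma dd_geom (k n : ℕ) : ddD C A k n ≤ ddD C A k 0 * (1/6) ^ n := by
  induction n with
  | zero => simp
  | succ n ih =>
    have h := dd_ratio hC hA hCA k n
    have hdd := dd_pos hC hA k (n + 1)
    rw [pow_succ]
    nlinarith

include hC hA hCA in
lemma dd_summable (k : ℕ) : Summable (fun n => (-1:ℝ) ^ n * ddD C A k n) := by
  apply Summable.of_norm
  have hg : Summable (fun n : ℕ => ddD C A k 0 * (1/6:ℝ) ^ n) :=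
    (summable_geometric_of_lt_one (by norm_num) (by norm_num)).mul_left _
  apply Summable.of_nonneg_of_le (fun n => norm_nonneg _) _ hg
  intro n
  rw [norm_mul, norm_pow, norm_neg, norm_one, one_pow, one_mul,
    Real.norm_eq_abs, abs_of_pos (dd_pos hC hA k n)]
  exact dd_geom hC hA hCA k n

end series

section series2

variable {C A : ℝ} (hC : 0 < C) (hA : 2 ≤ A) (hCA : 2 ≤ C * A)

lemma inv_helper {x y z : ℝ} (h : x = y * z) (hz : z ≠ 0) : (1 / x) * z = 1 / y := by
  subst h
  rw [one_div, mul_inv, mul_assoc, inv_mul_cancel₀ hz, mul_one, one_div]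

include hC hA hCA in
lemma ss_tail (k : ℕ) : |ssS C A k - ddD C A k 0| ≤ ddD C A k 0 / 5 := by
  have hsum := dd_summable hC hA hCA k
  have h0 : ssS C A k = ddD C A k 0 + ∑' n : ℕ, (-1:ℝ) ^ (n+1) * ddD C A k (n+1) := by
    rw [ssS, Summable.tsum_eq_zero_add hsum]
    norm_num
  rw [h0, add_sub_cancel_left]
  have hgeom : Summable (fun n : ℕ => ddD C A k 0 * (1/6:ℝ) * (1/6:ℝ) ^ n) :=
    (summable_geometric_of_lt_one (by norm_num) (by norm_num)).mul_left _
  have hnorm : ∀ n : ℕ, ‖(-1:ℝ) ^ (n+1) * ddD C A k (n+1)‖ ≤ ddD C A k 0 * (1/6) * (1/6) ^ n := by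
    intro n
    rw [norm_mul, norm_pow, norm_neg, norm_one, one_pow, one_mul, Real.norm_eq_abs,
      abs_of_pos (dd_pos hC hA k (n+1))]
    calc ddD C A k (n+1) ≤ ddD C A k 0 * (1/6) ^ (n+1) := dd_geom hC hA hCA k (n+1)
      _ = ddD C A k 0 * (1/6) * (1/6) ^ n := by rw [pow_succ]; ring
  have hsum2 : Summable (fun n : ℕ => (-1:ℝ) ^ (n+1) * ddD C A k (n+1)) := by
    apply Summable.of_norm
    exact Summable.of_nonneg_of_le (fun n => norm_nonneg _) hnorm hgeom
  calc |∑' n : ℕ, (-1:ℝ) ^ (n+1) * ddD C A k (n+1)|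
      ≤ ∑' n : ℕ, ‖(-1:ℝ) ^ (n+1) * ddD C A k (n+1)‖ := by
        exact norm_tsum_le_tsum_norm (Summable.of_nonneg_of_le (fun n => norm_nonneg _) hnorm hgeom)
    _ ≤ ∑' n : ℕ, ddD C A k 0 * (1/6:ℝ) * (1/6:ℝ) ^ n := by
        exact Summable.tsum_le_tsum hnorm (hsum2.norm) hgeom
    _ = ddD C A k 0 * (1/6:ℝ) * (1 - 1/6)⁻¹ := by
        rw [tsum_mul_left, tsum_geometric_of_lt_one (by norm_num) (by norm_num)]
    _ = ddD C A k 0 / 5 := by ring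

include hC hA hCA in
lemma ss_bounds (k : ℕ) :
    4/5 * ddD C A k 0 ≤ ssS C A k ∧ ssS C A k ≤ 6/5 * ddD C A k 0 := by
  have h := abs_le.1 (ss_tail hC hA hCA k)
  constructor <;> linarith [h.1, h.2]

include hC hA in
lemma dd0_step (k : ℕ) : ddD C A (k+1) 0 * (C * A ^ (k+1)) = ddD C A k 0 := by
  have hden : C ^ (2 * 0 + (k+1)) * A ^ eeE (k+1) 0 * qPoch (1 / A ^ 2) (1 / A ^ 2) 0
      = (C ^ (2 * 0 + k) * A ^ eeE k 0 * qPoch (1 / A ^ 2) (1 / A ^ 2) 0) * (C * A ^ (k+1)) := by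
    rw [ee_step, pow_add, show 2 * 0 + (k+1) = (2 * 0 + k) + 1 by ring, pow_add]
    ring
  have hz : C * A ^ (k+1) ≠ 0 := by positivity
  exact inv_helper hden hz

include hC hA hCA in
lemma CA_pow (k : ℕ) : 2 ≤ C * A ^ (k+1) := by
  have h1 : (1:ℝ) ≤ A ^ k := one_le_pow₀ (by linarith)
  have : C * A ^ (k+1) = (C * A) * A ^ k := by rw [pow_succ]; ring
  nlinarith

include hC hA hCA in
lemma ss_pos (k : ℕ) : 0 < ssS C A k := by
  have h := (ss_bounds hC hA hCA k).1
  have hd := dd_pos hC hA k 0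
  linarith

include hC hA hCA in
lemma ss_gap (k : ℕ) : ssS C A (k+1) + 1/5 * ddD C A k 0 ≤ ssS C A k := by
  have h1 := (ss_bounds hC hA hCA k).1
  have h2 := (ss_bounds hC hA hCA (k+1)).2
  have h3 := dd0_step hC hA (k := k)
  have h4 := CA_pow hC hA hCA k
  have h5 := dd_pos hC hA (k+1) 0
  have h6 := dd_pos hC hA k 0
  -- dd (k+1) 0 ≤ dd k 0 / 2
  have h7 : 2 * ddD C A (k+1) 0 ≤ ddD C A k 0 := by nlinarith
  linarith

include hC hA hCA in
lemma ss_gap_pos (k : ℕ) : 0 < ssS C A k - ssS C A (k+1) := by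
  have h1 := ss_gap hC hA hCA k
  have h2 := dd_pos hC hA k 0
  linarith

include hC hA in
lemma dd_shift_a (k n : ℕ) :
    ddD C A (k+1) n * (C * A ^ (k+1)) = ddD C A k n * (1 / A ^ 2) ^ n := by
  have hden : C ^ (2 * n + (k+1)) * A ^ eeE (k+1) n * qPoch (1 / A ^ 2) (1 / A ^ 2) n
      = (C ^ (2 * n + k) * A ^ eeE k n * qPoch (1 / A ^ 2) (1 / A ^ 2) n * (A ^ 2) ^ n) *
        (C * A ^ (k+1)) := by
    rw [ee_step, pow_add, show 2 * n + (k+1) = (2 * n + k) + 1 by ring, pow_add]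
    ring
  have hz : C * A ^ (k+1) ≠ 0 := by positivity
  have h := inv_helper hden hz
  rw [ddD, ddD, h, div_pow, one_pow, div_mul_div_comm, one_mul]

include hC hA in
lemma dd_shift_b (k n : ℕ) :
    ddD C A k (n+1) * (1 - (1 / A ^ 2) * (1 / A ^ 2) ^ n) = ddD C A (k+2) n := by
  obtain ⟨hq0, hq4⟩ := hq_bound hA
  have hqn : (1 / A ^ 2) ^ n ≤ 1 := pow_le_one₀ (le_of_lt hq0) (by linarith)
  have hz : 1 - (1 / A ^ 2) * (1 / A ^ 2) ^ n ≠ 0 := by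
    nlinarith [pow_pos hq0 n]
  have hden : C ^ (2 * (n+1) + k) * A ^ eeE k (n+1) * qPoch (1 / A ^ 2) (1 / A ^ 2) (n+1)
      = (C ^ (2 * n + (k+2)) * A ^ eeE (k+2) n * qPoch (1 / A ^ 2) (1 / A ^ 2) n) *
        (1 - (1 / A ^ 2) * (1 / A ^ 2) ^ n) := by
    rw [ee_shift, qPoch_succ, show 2 * (n+1) + k = (2 * n + (k+2)) by ring]
    ring
  exact inv_helper hden hz

include hC hA hCA in
lemma ss_rec (k : ℕ) : ssS C A k = C * A ^ (k+1) * ssS C A (k+1) - ssS C A (k+2) := by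
  set f : ℕ → ℝ := fun n => (-1:ℝ) ^ n * (C * A ^ (k+1) * ddD C A (k+1) n - ddD C A k n) with hf
  have hs1 := (dd_summable hC hA hCA (k+1)).hasSum
  have hs0 := (dd_summable hC hA hCA k).hasSum
  have hsum_f : HasSum f (C * A ^ (k+1) * ssS C A (k+1) - ssS C A k) := by
    have h1 : HasSum (fun n => (C * A ^ (k+1)) * ((-1:ℝ) ^ n * ddD C A (k+1) n))
        (C * A ^ (k+1) * ssS C A (k+1)) := hs1.mul_left _
    have h2 := h1.sub hs0
    convert h2 using 2 with n
    · rfl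
    rw [hf]
    ring
    rfl
  have hshift : ∀ n : ℕ, f (n + 1) = (-1:ℝ) ^ n * ddD C A (k+2) n := by
    intro n
    rw [hf]
    simp only []
    have ha := dd_shift_a hC hA k (n+1)
    have hb := dd_shift_b hC hA k n
    have : C * A ^ (k+1) * ddD C A (k+1) (n+1) = ddD C A k (n+1) * (1 / A ^ 2) ^ (n+1) := by
      rw [← ha]; ring
    rw [this, ← hb]
    rw [pow_succ (1 / A ^ 2) n]
    ring
  have hf0 : f 0 = 0 := by
    rw [hf]
    simp only []
    have ha := dd_shift_a hC hA k 0
    rw [show C * A ^ (k+1) * ddD C A (k+1) 0 = ddD C A (k+1) 0 * (C * A ^ (k+1)) by ring,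
      dd0_step hC hA]
    simp
  have hsum_g : HasSum (fun n => f (n + 1)) (ssS C A (k+2)) := by
    have h := (dd_summable hC hA hCA (k+2)).hasSum
    rw [show (fun n => f (n + 1)) = (fun n : ℕ => (-1:ℝ) ^ n * ddD C A (k+2) n) from
      funext hshift]
    exact h
  have := (hasSum_nat_add_iff (f := f) 1).1 hsum_g
  rw [Finset.sum_range_one, hf0, add_zero] at this
  have heq := HasSum.unique this hsum_f
  linarith

end series2

noncomputable def ttT (C A : ℝ) : ℕ → ℝ := fun i =>
  if i = 1 then ssS C A 0 / ssS C A 1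
  else if i % 2 = 1 then (ssS C A (i/2) - ssS C A (i/2+1)) / ssS C A (i/2+1)
  else ssS C A (i/2) / (ssS C A (i/2) - ssS C A (i/2+1))

/-- Theorem 1.1 (eq. (1.8)): for integer `a ≥ 2` and positive rational `c` with
`c·a ∈ ℤ⁺` and `c·a > 1`, the continued fraction
`[0; c·a − 1, 1, c·a² − 2, 1, c·a³ − 2, …]` equals the given ratio of series. -/
theorem statement2 (a : ℕ) (ha : 2 ≤ a) (c : ℚ) (hc : 0 < c)
    (hca : ∃ k : ℕ, 0 < k ∧ c * (a : ℚ) = (k : ℚ)) (hca1 : 1 < c * (a : ℚ)) :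
    CFracEq
      (fun i => if i = 0 then 0
        else if i = 1 then (c : ℝ) * (a : ℝ) - 1
        else if i % 2 = 0 then 1
        else (c : ℝ) * (a : ℝ) ^ ((i + 1) / 2) - 2)
      ((∑' n : ℕ, (-1 : ℝ) ^ n / ((c : ℝ) ^ (2 * n + 1) * (a : ℝ) ^ (2 * n ^ 2 + 3 * n + 1) *
          qPoch (1 / (a : ℝ) ^ 2) (1 / (a : ℝ) ^ 2) n)) /
        (∑' n : ℕ, (-1 : ℝ) ^ n / ((c : ℝ) ^ (2 * n) * (a : ℝ) ^ (2 * n ^ 2 + n) *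
          qPoch (1 / (a : ℝ) ^ 2) (1 / (a : ℝ) ^ 2) n))) := by
  obtain ⟨k₀, hk₀, hk⟩ := hca
  set C : ℝ := (c : ℝ) with hCdef
  set A : ℝ := (a : ℝ) with hAdef
  have hA : (2:ℝ) ≤ A := by rw [hAdef]; exact_mod_cast ha
  have hC : (0:ℝ) < C := by rw [hCdef]; exact_mod_cast hc
  have hk2 : 2 ≤ k₀ := by
    have h1 : (1:ℚ) < (k₀ : ℚ) := hk ▸ hca1
    exact_mod_cast h1
  have hCA : (2:ℝ) ≤ C * A := by
    have hq : (2:ℚ) ≤ c * (a:ℚ) := by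
      rw [hk]; exact_mod_cast hk2
    rw [hCdef, hAdef]
    exact_mod_cast hq
  set b : ℕ → ℝ := fun i => if i = 0 then 0
        else if i = 1 then C * A - 1
        else if i % 2 = 0 then 1
        else C * A ^ ((i + 1) / 2) - 2 with hbdef
  -- partial quotients are at least 1
  have hb : ∀ i, 1 ≤ i → 1 ≤ b i := by
    intro i hi
    rw [hbdef]
    by_cases h1 : i = 1
    · simp [h1]; linarith
    · by_cases h2 : i % 2 = 0
      · have hi0 : i ≠ 0 := by omega
        simp [hi0, h1, h2]
      · have hi0 : i ≠ 0 := by omega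
        simp only [hi0, h1, h2, if_false]
        obtain ⟨j, hj⟩ : ∃ j, (i + 1) / 2 = j + 2 := ⟨(i+1)/2 - 2, by omega⟩
        rw [hj]
        have hAj : (1:ℝ) ≤ A ^ j := one_le_pow₀ (by linarith)
        have h4 : (4:ℝ) ≤ C * A ^ (j + 2) := by
          have heq : C * A ^ (j + 2) = (C * A) * (A * A ^ j) := by ring
          rw [heq]
          calc (4:ℝ) = 2 * 2 := by norm_num
            _ ≤ (C * A) * (A * A ^ j) := by
                apply mul_le_mul hCA ?_ (by norm_num) (by linarith)
                nlinarith
        linarith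
  have ht : ∀ i, 1 ≤ i → 0 < ttT C A i := by
    intro i _
    unfold ttT
    split_ifs
    · exact div_pos (ss_pos hC hA hCA 0) (ss_pos hC hA hCA 1)
    · exact div_pos (ss_gap_pos hC hA hCA _) (ss_pos hC hA hCA _)
    · exact div_pos (ss_pos hC hA hCA _) (ss_gap_pos hC hA hCA _)
  have hrec : ∀ i, 1 ≤ i → ttT C A i = b i + 1 / ttT C A (i + 1) := by
    intro i hi
    rcases Nat.even_or_odd i with ⟨m, hm⟩ | ⟨m, hm⟩
    · -- even case : i = 2m, m ≥ 1
      have hm1 : 1 ≤ m := by omega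
      have e1 : ttT C A i = ssS C A m / (ssS C A m - ssS C A (m+1)) := by
        unfold ttT
        have h1 : i ≠ 1 := by omega
        have h2 : i % 2 ≠ 1 := by omega
        have h3 : i / 2 = m := by omega
        simp [h1, h2, h3]
      have e2 : ttT C A (i + 1) = (ssS C A m - ssS C A (m+1)) / ssS C A (m+1) := by
        unfold ttT
        have h1 : i + 1 ≠ 1 := by omega
        have h2 : (i + 1) % 2 = 1 := by omega
        have h3 : (i + 1) / 2 = m := by omega
        simp [h1, h2, h3, show i ≠ 0 by omega]
      have e3 : b i = 1 := by
        rw [hbdef]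
        have h0 : i ≠ 0 := by omega
        have h1 : i ≠ 1 := by omega
        have h2 : i % 2 = 0 := by omega
        simp [h0, h1, h2]
      rw [e1, e2, e3, one_div_div]
      have hgap := ss_gap_pos hC hA hCA m
      have hs1 := ss_pos hC hA hCA (m+1)
      field_simp
      ring
    · -- odd case : i = 2m+1
      rcases Nat.eq_zero_or_pos m with rfl | hm1
      · -- i = 1
        have hi1 : i = 1 := by omega
        subst hi1
        have e1 : ttT C A 1 = ssS C A 0 / ssS C A 1 := by unfold ttT; simp
        have e2 : ttT C A 2 = ssS C A 1 / (ssS C A 1 - ssS C A 2) := by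
          unfold ttT; norm_num
        have e3 : b 1 = C * A - 1 := by rw [hbdef]; norm_num
        rw [e1, e2, e3, one_div_div]
        have hr := ss_rec hC hA hCA 0
        rw [pow_one] at hr
        have hs1 := ss_pos hC hA hCA 1
        field_simp
        linear_combination hr
      · -- i = 2m+1, m ≥ 1
        have e1 : ttT C A i = (ssS C A m - ssS C A (m+1)) / ssS C A (m+1) := by
          unfold ttT
          have h1 : i ≠ 1 := by omega
          have h2 : i % 2 = 1 := by omega
          have h3 : i / 2 = m := by omega
          simp [h1, h2, h3]
        have e2 : ttT C A (i + 1) = ssS C A (m+1) / (ssS C A (m+1) - ssS C A (m+2)) := by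
          unfold ttT
          have h1 : i + 1 ≠ 1 := by omega
          have h2 : (i + 1) % 2 ≠ 1 := by omega
          have h3 : (i + 1) / 2 = m + 1 := by omega
          simp [h1, h2, h3, show i ≠ 0 by omega]
        have e3 : b i = C * A ^ (m + 1) - 2 := by
          rw [hbdef]
          have h0 : i ≠ 0 := by omega
          have h1 : i ≠ 1 := by omega
          have h2 : ¬ (i % 2 = 0) := by omega
          have h3 : (i + 1) / 2 = m + 1 := by omega
          simp [h0, h1, h2, h3]
        rw [e1, e2, e3, one_div_div]
        have hr := ss_rec hC hA hCA m
        have hs1 := ss_pos hC hA hCA (m+1)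
        field_simp
        linear_combination hr
  have hb0 : b 0 = 0 := by rw [hbdef]; norm_num
  have hlim := cf_limit b (ttT C A) hb ht hrec hb0
  have hTT1 : ttT C A 1 = ssS C A 0 / ssS C A 1 := by unfold ttT; simp
  rw [hTT1, one_div_div] at hlim
  have hN : (∑' n : ℕ, (-1 : ℝ) ^ n / (C ^ (2 * n + 1) * A ^ (2 * n ^ 2 + 3 * n + 1) *
      qPoch (1 / A ^ 2) (1 / A ^ 2) n)) = ssS C A 1 := by
    rw [ssS]
    apply tsum_congr
    intro n
    rw [ddD, show eeE 1 n = 2 * n ^ 2 + 3 * n + 1 from by unfold eeE; norm_num,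
      div_eq_mul_one_div]
  have hD : (∑' n : ℕ, (-1 : ℝ) ^ n / (C ^ (2 * n) * A ^ (2 * n ^ 2 + n) *
      qPoch (1 / A ^ 2) (1 / A ^ 2) n)) = ssS C A 0 := by
    rw [ssS]
    apply tsum_congr
    intro n
    rw [ddD, show eeE 0 n = 2 * n ^ 2 + n from by unfold eeE; ring_nf,
      show 2 * n + 0 = 2 * n from by omega, div_eq_mul_one_div]
  rw [hN, hD]
  exact hlim
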